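/- Let ε = exp(2πi/5), H = diag[ε⁴,ε²,ε,ε³], α = (1-√5)/2, and I the symmetric matrix with first row [1,α,α²,-α] and subsequent rows its cyclic shifts as in rows [α,α²,-α,1],[α²,-α,1,α],[-α,1,α,α²]. If f is a homogeneous cubic form in x,y,z,t such that f∘H⁻¹ and f∘I⁻¹ are both proportional to f and V(f) is nonsingular, then f is a scalar multiple of x²y + y²z + z²t + t²x. -/

import Mathlib

/-!
Since `H` is diagonal with primitive fifth roots of unity on the diagonal, a cubic that is
semi-invariant under `H` is supported on the monomials `x^m` with one fixed value of
`4 m₀ + 2 m₁ + m₂ + 3 m₃ mod 5`, and each of these five classes contains exactly four cubic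
monomials. As `I² = (5 + 5α) • 1`, an eigenvalue `c` of `I` on cubics satisfies `c² = (5 + 5α)³`.
Evaluating `f (I p) = c f (p)` at four points then gives, in each class, a linear system in the four
coefficients which forces them to vanish, except in the class of `x²y, y²z, z²t, t²x`, where it
forces them to be equal.
-/

open MvPolynomial Matrix Complex

/-- Linear substitution of the variables of `f` by the matrix `A`. -/
noncomputable def substM (A : Matrix (Fin 4) (Fin 4) ℂ)
    (f : MvPolynomial (Fin 4) ℂ) : MvPolynomial (Fin 4) ℂ :=
  MvPolynomial.aeval (fun i => ∑ j : Fin 4, MvPolynomial.C (A i j) * MvPolynomial.X j) f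

namespace MvPolynomial

variable {σ R : Type*} [CommSemiring R]

lemma eval_eq_sum_of_support_subset [Fintype σ]
    {f : MvPolynomial σ R} {s : Finset (σ →₀ ℕ)} (hs : f.support ⊆ s) (x : σ → R) :
    eval x f = ∑ d ∈ s, coeff d f * ∏ i, x i ^ d i := by
  rw [eval_eq']
  exact Finset.sum_subset hs fun d _ hd => by rw [notMem_support_iff.mp hd, zero_mul]

lemma eq_sum_of_support_subset
    {f : MvPolynomial σ R} {s : Finset (σ →₀ ℕ)} (hs : f.support ⊆ s) :
    f = ∑ d ∈ s, monomial d (coeff d f) := by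
  conv_lhs => rw [← support_sum_monomial_coeff f]
  exact Finset.sum_subset hs fun d _ hd => by rw [notMem_support_iff.mp hd, map_zero]

lemma eq_zero_of_support_subset
    {f : MvPolynomial σ R} {s : Finset (σ →₀ ℕ)} (hs : f.support ⊆ s)
    (h : ∀ d ∈ s, coeff d f = 0) : f = 0 := by
  rw [eq_sum_of_support_subset hs]
  exact Finset.sum_eq_zero fun d hd => by rw [h d hd, map_zero]

lemma IsHomogeneous.sum_apply_eq {n : ℕ} {f : MvPolynomial (Fin 4) R}
    (hf : f.IsHomogeneous n) {m : Fin 4 →₀ ℕ} (hm : m ∈ f.support) :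
    m 0 + m 1 + m 2 + m 3 = n := by
  rw [hf.degree_eq_sum_deg_support hm, ← Finsupp.degree_apply, Finsupp.degree_eq_sum,
    Fin.sum_univ_four]

end MvPolynomial

section Substitution

variable (A B : Matrix (Fin 4) (Fin 4) ℂ) (f : MvPolynomial (Fin 4) ℂ)

lemma eval_substM (v : Fin 4 → ℂ) : eval v (substM A f) = eval (A *ᵥ v) f := by
  rw [substM, aeval_eq_bind₁, hom_bind₁]
  congr 2
  · ext; simp
  · ext i; simp [Matrix.mulVec, dotProduct]

lemma substM_substM : substM A (substM B f) = substM (B * A) f :=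
  MvPolynomial.funext fun v => by simp only [eval_substM, Matrix.mulVec_mulVec]

lemma substM_one : substM 1 f = f :=
  MvPolynomial.funext fun v => by simp only [eval_substM, Matrix.one_mulVec]

lemma substM_smul (c : ℂ) : substM A (c • f) = c • substM A f :=
  map_smul _ _ _

lemma substM_diagonal_monomial (d : Fin 4 → ℂ) (m : Fin 4 →₀ ℕ) (a : ℂ) :
    substM (diagonal d) (monomial m a) = monomial m ((∏ i, d i ^ m i) * a) := by
  simp only [substM, diagonal_apply, apply_ite C, C_0, ite_mul, zero_mul, Finset.sum_ite_eq,
    Finset.mem_univ, if_true, aeval_eq_bind₁, monomial_eq,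
    Finsupp.prod_fintype _ _ (fun _ => pow_zero _), map_mul, algHom_C, algebraMap_eq, map_prod,
    map_pow, bind₁_X_right, mul_pow, Finset.prod_mul_distrib]
  ring

lemma coeff_substM_diagonal (d : Fin 4 → ℂ) (m : Fin 4 →₀ ℕ) :
    coeff m (substM (diagonal d) f) = (∏ i, d i ^ m i) * coeff m f := by
  induction f using MvPolynomial.induction_on' with
  | monomial m' a =>
    rw [substM_diagonal_monomial, coeff_monomial, coeff_monomial]
    split_ifs with h <;> simp [h]
  | add p q hp hq => simp only [substM, map_add, coeff_add] at *; rw [hp, hq, mul_add]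

variable {A f}

lemma substM_eq_inv_smul_of_substM_inv (hA : IsUnit A.det) {c : ℂ} (hc : c ≠ 0)
    (h : substM A⁻¹ f = c • f) : substM A f = c⁻¹ • f := by
  have := congrArg (substM A) h
  rw [substM_substM, nonsing_inv_mul A hA, substM_one, substM_smul] at this
  rw [eq_inv_smul_iff₀ hc, ← this]

lemma prod_pow_eq_of_substM_diagonal_eq_smul {d : Fin 4 → ℂ} {c : ℂ}
    (h : substM (diagonal d) f = c • f) {m : Fin 4 →₀ ℕ} (hm : m ∈ f.support) :
    ∏ i, d i ^ m i = c := by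
  have := congrArg (coeff m) h
  rw [coeff_substM_diagonal, coeff_smul, smul_eq_mul] at this
  exact mul_right_cancel₀ (mem_support_iff.mp hm) this

lemma MvPolynomial.IsHomogeneous.substM_smul_one {n : ℕ} (hf : f.IsHomogeneous n) (s : ℂ) :
    substM (s • 1) f = s ^ n • f := by
  ext m
  rw [smul_one_eq_diagonal, coeff_substM_diagonal, coeff_smul, smul_eq_mul,
    Finset.prod_pow_eq_pow_sum]
  by_cases hm : coeff m f = 0
  · simp [hm]
  · rw [← Finsupp.degree_eq_sum, Finsupp.degree_apply, ← hf.degree_eq_sum_deg_support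
      (mem_support_iff.mpr hm)]

lemma sq_eq_pow_of_substM_eq_smul {n : ℕ} (hf : f.IsHomogeneous n) (hf0 : f ≠ 0) {s c : ℂ}
    (hA : A * A = s • 1) (h : substM A f = c • f) : c ^ 2 = s ^ n := by
  have := congrArg (substM A) h
  rw [substM_substM, hA, hf.substM_smul_one, substM_smul, h, smul_smul] at this
  rw [sq]
  exact (smul_left_injective ℂ hf0 this).symm

lemma eval_mulVec_eq_mul_eval {c : ℂ}
    (h : substM A f = c • f) (p : Fin 4 → ℂ) : eval (A *ᵥ p) f = c * eval p f := by
  rw [← eval_substM, h, smul_eq_C_mul, eval_mul, eval_C]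

end Substitution

noncomputable def expVec (a b c d : ℕ) : Fin 4 →₀ ℕ := Finsupp.equivFunOnFinite.symm ![a, b, c, d]

@[simp] lemma expVec_apply_zero (a b c d : ℕ) : expVec a b c d 0 = a := rfl
@[simp] lemma expVec_apply_one (a b c d : ℕ) : expVec a b c d 1 = b := rfl
@[simp] lemma expVec_apply_two (a b c d : ℕ) : expVec a b c d 2 = c := rfl
@[simp] lemma expVec_apply_three (a b c d : ℕ) : expVec a b c d 3 = d := rfl

@[simp] lemma expVec_inj {a b c d a' b' c' d' : ℕ} :
    expVec a b c d = expVec a' b' c' d' ↔ a = a' ∧ b = b' ∧ c = c' ∧ d = d' := by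
  simp [expVec, Finsupp.equivFunOnFinite.symm.injective.eq_iff, funext_iff, Fin.forall_fin_succ]

lemma eq_expVec (m : Fin 4 →₀ ℕ) : m = expVec (m 0) (m 1) (m 2) (m 3) := by
  ext i; fin_cases i <;> rfl

lemma monomial_expVec (a b c d : ℕ) (r : ℂ) :
    monomial (expVec a b c d) r = C r * X 0 ^ a * X 1 ^ b * X 2 ^ c * X 3 ^ d := by
  simp [monomial_eq, Finsupp.prod_fintype, Fin.prod_univ_four, mul_assoc]

/-- The exponent of `ε` by which `diagonal ![ε ^ 4, ε ^ 2, ε, ε ^ 3]` scales `x^m`. -/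
def weightH (m : Fin 4 →₀ ℕ) : ℕ := 4 * m 0 + 2 * m 1 + m 2 + 3 * m 3

noncomputable def cubicWeightClass : ℕ → Finset (Fin 4 →₀ ℕ)
  | 0 => {expVec 2 1 0 0, expVec 0 2 1 0, expVec 0 0 2 1, expVec 1 0 0 2}
  | 1 => {expVec 0 1 1 1, expVec 0 3 0 0, expVec 1 0 2 0, expVec 2 0 0 1}
  | 2 => {expVec 0 0 1 2, expVec 0 2 0 1, expVec 1 1 1 0, expVec 3 0 0 0}
  | 3 => {expVec 0 0 3 0, expVec 0 1 0 2, expVec 1 0 1 1, expVec 1 2 0 0}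
  | _ => {expVec 0 0 0 3, expVec 0 1 2 0, expVec 1 1 0 1, expVec 2 0 1 0} -- weight 4

lemma mem_cubicWeightClass {m : Fin 4 →₀ ℕ} (hm : m 0 + m 1 + m 2 + m 3 = 3) :
    m ∈ cubicWeightClass (weightH m % 5) := by
  rw [weightH, eq_expVec m]
  simp only [expVec_apply_zero, expVec_apply_one, expVec_apply_two, expVec_apply_three]
  generalize m 0 = a, m 1 = b, m 2 = c, m 3 = d at hm
  obtain rfl : d = 3 - a - b - c := by omega
  have : a ≤ 3 := by omega
  have : b ≤ 3 := by omega
  have : c ≤ 3 := by omega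
  interval_cases a <;> interval_cases b <;> interval_cases c <;> simp_all [cubicWeightClass]

lemma exists_support_subset_cubicWeightClass {ε c : ℂ} (hε : IsPrimitiveRoot ε 5)
    {f : MvPolynomial (Fin 4) ℂ} (hf : f.IsHomogeneous 3)
    (h : substM (diagonal ![ε ^ 4, ε ^ 2, ε, ε ^ 3]) f = c • f) :
    ∃ k < 5, f.support ⊆ cubicWeightClass k := by
  rcases f.support.eq_empty_or_nonempty with hf0 | ⟨m₀, hm₀⟩
  · exact ⟨0, by norm_num, by simp [hf0]⟩
  have hpow : ∀ m ∈ f.support, ε ^ weightH m = c := fun m hm => by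
    rw [← prod_pow_eq_of_substM_diagonal_eq_smul h hm, Fin.prod_univ_four, weightH]
    simp [← pow_mul, ← pow_add]
  refine ⟨weightH m₀ % 5, Nat.mod_lt _ (by norm_num), fun m hm => ?_⟩
  have hmod : weightH m ≡ weightH m₀ [MOD 5] := by
    rw [hε.eq_orderOf, ← (hε.isOfFinOrder (by norm_num)).pow_eq_pow_iff_modEq, hpow m hm,
      hpow m₀ hm₀]
  rw [← hmod]
  exact mem_cubicWeightClass (hf.sum_apply_eq hm)

def matI (α : ℂ) : Matrix (Fin 4) (Fin 4) ℂ :=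
  !![1, α, α ^ 2, -α;
     α, α ^ 2, -α, 1;
     α ^ 2, -α, 1, α;
     -α, 1, α, α ^ 2]

lemma matI_mul_self {α : ℂ} (hα : α ^ 2 = α + 1) : matI α * matI α = (5 + 5 * α) • 1 := by
  ext i j
  fin_cases i <;> fin_cases j <;> simp [matI, mul_apply, Fin.sum_univ_four, one_apply] <;> grind

lemma isUnit_det_matI {α : ℂ} (hα : α ^ 2 = α + 1) : IsUnit (matI α).det := by
  have : (5 + 5 * α) ≠ 0 := fun h => by grind
  refine isUnit_det_of_right_inverse (B := (5 + 5 * α)⁻¹ • matI α) ?_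
  rw [mul_smul_comm, matI_mul_self hα, smul_smul, inv_mul_cancel₀ this, one_smul]

noncomputable def cyclicCubic : MvPolynomial (Fin 4) ℂ :=
  X 0 ^ 2 * X 1 + X 1 ^ 2 * X 2 + X 2 ^ 2 * X 3 + X 3 ^ 2 * X 0

lemma exists_eq_smul_cyclicCubic_of_substM_matI {α c : ℂ} (hα : α ^ 2 = α + 1)
    {f : MvPolynomial (Fin 4) ℂ} (hf : f.IsHomogeneous 3) {k : ℕ} (hk : k < 5)
    (hs : f.support ⊆ cubicWeightClass k) (h : substM (matI α) f = c • f) :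
    ∃ t : ℂ, f = t • cyclicCubic := by
  obtain rfl | hf0 := eq_or_ne f 0
  · exact ⟨0, (zero_smul ℂ _).symm⟩
  have hc := sq_eq_pow_of_substM_eq_smul hf hf0 (matI_mul_self hα) h
  have h₀ := eval_mulVec_eq_mul_eval h ![1, 0, 0, 0]
  have h₁ := eval_mulVec_eq_mul_eval h ![0, 1, 0, 0]
  have h₂ := eval_mulVec_eq_mul_eval h ![0, 0, 1, 0]
  have h₃ := eval_mulVec_eq_mul_eval h ![1, 1, 1, 0]
  simp only [eval_eq_sum_of_support_subset hs] at h₀ h₁ h₂ h₃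
  interval_cases k
  · obtain ⟨e₁, e₂, e₃⟩ : coeff (expVec 0 2 1 0) f = coeff (expVec 2 1 0 0) f ∧
        coeff (expVec 0 0 2 1) f = coeff (expVec 2 1 0 0) f ∧
        coeff (expVec 1 0 0 2) f = coeff (expVec 2 1 0 0) f := by
      simp [cubicWeightClass, Fin.prod_univ_four, matI] at h₀ h₁ h₂ h₃
      grind
    refine ⟨coeff (expVec 2 1 0 0) f, ?_⟩
    conv_lhs => rw [eq_sum_of_support_subset hs]
    simp [cubicWeightClass, monomial_expVec, e₁, e₂, e₃, cyclicCubic, smul_eq_C_mul]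
    ring
  all_goals
    refine ⟨0, ?_⟩
    rw [zero_smul]
    refine eq_zero_of_support_subset hs ?_
    simp [cubicWeightClass, Fin.prod_univ_four, matI] at h₀ h₁ h₂ h₃ ⊢
    grind

theorem stmt15_general (ε : ℂ) (hε : ε = Complex.exp (2 * Real.pi * Complex.I / 5))
    (α : ℂ) (hα : α = ((1 - Real.sqrt 5 : ℝ) : ℂ) / 2)
    (H I : Matrix (Fin 4) (Fin 4) ℂ)
    (hH : H = Matrix.diagonal ![ε ^ 4, ε ^ 2, ε, ε ^ 3])
    (hI : I = !![1, α, α ^ 2, -α;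
                 α, α ^ 2, -α, 1;
                 α ^ 2, -α, 1, α;
                 -α, 1, α, α ^ 2])
    (f : MvPolynomial (Fin 4) ℂ) (hf : f.IsHomogeneous 3)
    (hinvH : ∃ c : ℂ, c ≠ 0 ∧ substM H⁻¹ f = c • f)
    (hinvI : ∃ c : ℂ, c ≠ 0 ∧ substM I⁻¹ f = c • f) :
    ∃ c : ℂ, f = c • (MvPolynomial.X 0 ^ 2 * MvPolynomial.X 1 +
        MvPolynomial.X 1 ^ 2 * MvPolynomial.X 2 +
        MvPolynomial.X 2 ^ 2 * MvPolynomial.X 3 +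
        MvPolynomial.X 3 ^ 2 * MvPolynomial.X 0) := by
  have hε₅ : IsPrimitiveRoot ε 5 := by
    rw [hε]; exact_mod_cast Complex.isPrimitiveRoot_exp 5 (by norm_num)
  have hα₂ : α ^ 2 = α + 1 := by
    rw [hα]; exact_mod_cast Real.goldenConj_sq
  have hH₀ : IsUnit H.det := by
    simp [hH, det_diagonal, Fin.prod_univ_four, hε₅.ne_zero (by norm_num)]
  obtain ⟨cH, hcH, hfH⟩ := hinvH
  obtain ⟨cI, hcI, hfI⟩ := hinvI
  subst hH hI
  obtain ⟨k, hk, hs⟩ := exists_support_subset_cubicWeightClass hε₅ hf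
    (substM_eq_inv_smul_of_substM_inv hH₀ hcH hfH)
  exact exists_eq_smul_cyclicCubic_of_substM_matI hα₂ hf hk hs
    (substM_eq_inv_smul_of_substM_inv (isUnit_det_matI hα₂) hcI hfI)

theorem stmt15 (ε : ℂ) (hε : ε = Complex.exp (2 * Real.pi * Complex.I / 5))
    (α : ℂ) (hα : α = ((1 - Real.sqrt 5 : ℝ) : ℂ) / 2)
    (H I : Matrix (Fin 4) (Fin 4) ℂ)
    (hH : H = Matrix.diagonal ![ε ^ 4, ε ^ 2, ε, ε ^ 3])
    (hI : I = !![1, α, α ^ 2, -α;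
                 α, α ^ 2, -α, 1;
                 α ^ 2, -α, 1, α;
                 -α, 1, α, α ^ 2])
    (f : MvPolynomial (Fin 4) ℂ) (hf : f.IsHomogeneous 3)
    (hinvH : ∃ c : ℂ, c ≠ 0 ∧ substM H⁻¹ f = c • f)
    (hinvI : ∃ c : ℂ, c ≠ 0 ∧ substM I⁻¹ f = c • f)
    (hns : ¬ ∃ a : Fin 4 → ℂ, a ≠ 0 ∧
      ∀ i : Fin 4, MvPolynomial.eval a (MvPolynomial.pderiv i f) = 0) :
    ∃ c : ℂ, f = c • (MvPolynomial.X 0 ^ 2 * MvPolynomial.X 1 +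
        MvPolynomial.X 1 ^ 2 * MvPolynomial.X 2 +
        MvPolynomial.X 2 ^ 2 * MvPolynomial.X 3 +
        MvPolynomial.X 3 ^ 2 * MvPolynomial.X 0) :=
  stmt15_general ε hε α hα H I hH hI f hf hinvH hinvI
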